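/- Let ℤ[1/4] denote the additive subgroup of ℚ consisting of all rationals of the form a / 4^n with a ∈ ℤ and n ∈ ℕ. Consider System C (C_n = ℤ with every transition map equal to multiplication by 4) and System B (B_n = ℤ⁴ with every transition map (x, y, z, w) ↦ (s, s, s, s), s = x + y + z + w). The levelwise maps Δ_n : C_n → B_n, x ↦ (x, x, x, x), commute with the transition maps of the two systems, and hence induce a group homomorphism Δ : colim C_n → colim B_n on the direct limits. Under the isomorphism χ : colim C_n ≅ ℤ[1/4] (class of x ∈ C_n ↦ x / 4^n) and the isomorphism ψ : colim B_n ≅ ℤ[1/4] (class of (x, y, z, w) ∈ B_n ↦ (x + y + z + w) / 4^{n+1}), the induced map Δ corresponds to the identity map of ℤ[1/4]; that is, ψ ∘ Δ = χ. -/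

import Mathlib

/-! The diagonal `x ↦ (x, x, x, x)` intertwines the transition maps because `x + x + x + x = 4x`,
so it induces `Δ` on the direct limits. On the class of `x ∈ C_n` both `ψ ∘ Δ` and `χ` give
`4x / 4^(n+1) = x / 4^n`, and homomorphisms out of a direct limit agree once they agree on
every level. -/

/-- The step map of System B: `(x, y, z, w) ↦ (s, s, s, s)` where `s = x + y + z + w`. -/
def stepB : (ℤ × ℤ × ℤ × ℤ) →+ (ℤ × ℤ × ℤ × ℤ) where
  toFun p := (p.1 + p.2.1 + p.2.2.1 + p.2.2.2, p.1 + p.2.1 + p.2.2.1 + p.2.2.2,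
    p.1 + p.2.1 + p.2.2.1 + p.2.2.2, p.1 + p.2.1 + p.2.2.1 + p.2.2.2)
  map_zero' := by simp
  map_add' p q := by
    simp only [Prod.fst_add, Prod.snd_add, Prod.mk_add_mk, Prod.mk.injEq]
    refine ⟨?_, ?_, ?_, ?_⟩ <;> ring

/-- `stepB` viewed as an additive monoid endomorphism, so that it can be iterated. -/
def stepBEnd : AddMonoid.End (ℤ × ℤ × ℤ × ℤ) := stepB

/-- System B: the transition map from level `i` to level `j` is the `(j-i)`-fold
iterate of `stepB`. -/
def sysB : ∀ i j : ℕ, i ≤ j → (ℤ × ℤ × ℤ × ℤ) →+ (ℤ × ℤ × ℤ × ℤ) :=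
  fun i j _ => stepBEnd ^ (j - i)

/-- The step map of System C: multiplication by `4` on `ℤ`. -/
def stepC : ℤ →+ ℤ where
  toFun x := 4 * x
  map_zero' := by simp
  map_add' x y := by ring

/-- `stepC` viewed as an additive monoid endomorphism, so that it can be iterated. -/
def stepCEnd : AddMonoid.End ℤ := stepC

/-- System C: the transition map from level `i` to level `j` is the `(j-i)`-fold
iterate of `stepC`. -/
def sysC : ∀ i j : ℕ, i ≤ j → ℤ →+ ℤ :=
  fun i j _ => stepCEnd ^ (j - i)

/-- The levelwise map `Δ_n : C_n → B_n`, `x ↦ (x, x, x, x)`. -/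
def DmapCB : ℤ →+ (ℤ × ℤ × ℤ × ℤ) where
  toFun x := (x, x, x, x)
  map_zero' := by simp
  map_add' x y := by simp


lemma AddMonoidHom.comp_pow_of_comp_eq {M N : Type*} [AddMonoid M] [AddMonoid N] (f : M →+ N)
    {a : AddMonoid.End M} {b : AddMonoid.End N} (h : f.comp a = b.comp f) (k : ℕ) :
    f.comp (a ^ k) = (b ^ k).comp f :=
  AddMonoidHom.ext (Function.Semiconj.iterate_right (fun x => DFunLike.congr_fun h x) k)

lemma stepB_DmapCB (x : ℤ) : stepB (DmapCB x) = DmapCB (stepC x) := by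
  simp only [stepB, stepC, DmapCB, AddMonoidHom.coe_mk, ZeroHom.coe_mk, Prod.mk.injEq]
  omega

lemma DmapCB_comp_sysC (i j : ℕ) (h : i ≤ j) : DmapCB.comp (sysC i j h) = (sysB i j h).comp DmapCB :=
  DmapCB.comp_pow_of_comp_eq (AddMonoidHom.ext fun x => (stepB_DmapCB x).symm) (j - i)

noncomputable def limDmapCB :
    AddCommGroup.DirectLimit (fun _ : ℕ => ℤ) sysC →+
      AddCommGroup.DirectLimit (fun _ : ℕ => ℤ × ℤ × ℤ × ℤ) sysB :=
  AddCommGroup.DirectLimit.map (fun _ => DmapCB) DmapCB_comp_sysC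

lemma limDmapCB_of (n : ℕ) (x : ℤ) :
    limDmapCB (AddCommGroup.DirectLimit.of (fun _ : ℕ => ℤ) sysC n x) =
      AddCommGroup.DirectLimit.of (fun _ : ℕ => ℤ × ℤ × ℤ × ℤ) sysB n (DmapCB x) :=
  AddCommGroup.DirectLimit.map_apply_of (fun _ => DmapCB) DmapCB_comp_sysC x

/-- The levelwise maps `x ↦ (x, x, x, x)` commute with the transition maps of Systems C
and B, hence induce a group homomorphism `Δ` on the direct limits; under the isomorphisms
`χ : colim C_n ≅ ℤ[1/4]` and `ψ : colim B_n ≅ ℤ[1/4]`, the induced map `Δ` corresponds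
to the identity of `ℤ[1/4]`, i.e. `ψ ∘ Δ = χ`. -/
theorem inducedMap_DmapCB_corresponds_to_id :
    (∀ x : ℤ, stepB (DmapCB x) = DmapCB (stepC x)) ∧
    ∃ Δ : AddCommGroup.DirectLimit (fun _ : ℕ => ℤ) sysC →+ AddCommGroup.DirectLimit (fun _ : ℕ => ℤ × ℤ × ℤ × ℤ) sysB,
      (∀ (n : ℕ) (x : ℤ), Δ (AddCommGroup.DirectLimit.of (fun _ : ℕ => ℤ) sysC n x) = AddCommGroup.DirectLimit.of (fun _ : ℕ => ℤ × ℤ × ℤ × ℤ) sysB n (DmapCB x)) ∧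
      ∀ (χ : AddCommGroup.DirectLimit (fun _ : ℕ => ℤ) sysC →+ ℚ) (ψ : AddCommGroup.DirectLimit (fun _ : ℕ => ℤ × ℤ × ℤ × ℤ) sysB →+ ℚ),
        (∀ (n : ℕ) (x : ℤ), χ (AddCommGroup.DirectLimit.of (fun _ : ℕ => ℤ) sysC n x) = (x : ℚ) / 4 ^ n) →
        (∀ (n : ℕ) (x : ℤ × ℤ × ℤ × ℤ), ψ (AddCommGroup.DirectLimit.of (fun _ : ℕ => ℤ × ℤ × ℤ × ℤ) sysB n x) = ((x.1 : ℚ) + (x.2.1 : ℚ) + (x.2.2.1 : ℚ) + (x.2.2.2 : ℚ)) / 4 ^ (n + 1)) →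
        ∀ a, ψ (Δ a) = χ a := by
  refine ⟨stepB_DmapCB, limDmapCB, limDmapCB_of, ?_⟩
  intro χ ψ hχ hψ
  suffices ψ.comp limDmapCB = χ from DFunLike.congr_fun this
  ext n
  simp only [AddMonoidHom.comp_apply, limDmapCB_of, hψ, hχ,
    DmapCB, AddMonoidHom.coe_mk, ZeroHom.coe_mk, pow_succ]
  ring
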